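/- Let p be a prime, 0 ≤ n < m, k ≥ 1, and let χ1,…,χk be characters mod p^m, at least one of which is primitive mod p^m. Suppose χ1⋯χk is induced by a primitive character ψ mod p^{m−n}. Then J_{p^n}(χ1,…,χk,p^m) = (∏_{i=1}^{k} G(χ_i, p^m)) / G(ψ, p^{m−n}). -/

import Mathlib

/-!
Expanding a product of Gauss sums and using orthogonality of additive characters gives
`q · J_B(χ) = ∑_t e(-tB) ∏_i G(χ_i, e_t)`, where `e_t(x) = e(tx)`. If one `χ_i` is primitive,
its Gauss sum against `e_t` vanishes for every non-unit `t`, while for units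
`G(χ_i, e_t) = χ_i⁻¹(t) G(χ_i)`; hence `q · J_B(χ)` is the discrete Fourier transform of
`(∏ χ_i)⁻¹` at `B` times `∏ G(χ_i)`. When `∏ χ_i` is induced from `ψ` mod `p^(m-n)` and
`B = p^n`, the transform at `B` only sees `t mod p^(m-n)` and equals
`p^n 𝓕ψ⁻¹(1)`, and Fourier inversion for the primitive `ψ` gives `G(ψ) · 𝓕ψ⁻¹(1) = p^(m-n)`.
-/

open Complex

/-- The generalized Jacobi sum `J_B(χ₁,…,χ_k, q)`. -/
noncomputable def Jsum {q : ℕ} [NeZero q] {k : ℕ}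
    (χ : Fin k → DirichletCharacter ℂ q) (B : ZMod q) : ℂ :=
  ∑ x : Fin k → ZMod q, if (∑ i, x i) = B then ∏ i, χ i (x i) else 0

/-- The Gauss sum `G(χ,q) = ∑_{x mod q} χ(x) e^{2πi x/q}`. -/
noncomputable def Gsum {q : ℕ} [NeZero q] (χ : DirichletCharacter ℂ q) : ℂ :=
  ∑ x : ZMod q, χ x * Complex.exp (2 * Real.pi * Complex.I * (x.val : ℂ) / q)

open Finset AddChar DirichletCharacter ZMod

lemma AddChar.map_sum_eq_prod {A M ι : Type*} [AddCommMonoid A] [CommMonoid M] (e : AddChar A M)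
    (s : Finset ι) (x : ι → A) : e (∑ i ∈ s, x i) = ∏ i ∈ s, e (x i) :=
  map_prod e.toMonoidHom (fun i => Multiplicative.ofAdd (x i)) s

lemma MulChar.prod_apply_coe {R R' ι : Type*} [CommMonoid R] [CommMonoidWithZero R']
    (s : Finset ι) (χ : ι → MulChar R R') (u : Rˣ) : (∏ i ∈ s, χ i) u = ∏ i ∈ s, χ i u := by
  classical
  induction s using Finset.induction_on with
  | empty => simp
  | insert a s ha ih => rw [prod_insert ha, prod_insert ha, MulChar.mul_apply, ih]

lemma sum_comp_of_surjective_addMonoidHom {G H F M : Type*} [AddGroup G] [Fintype G]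
    [AddGroup H] [Fintype H] [FunLike F G H] [AddMonoidHomClass F G H] [AddCommMonoid M] (f : F)
    (hf : Function.Surjective f) (φ : H → M) :
    ∑ g, φ (f g) = (Fintype.card G / Fintype.card H) • ∑ h, φ h := by
  classical
  have hfiber (h : H) : #{g | f g = h} = #{g | f g = 0} :=
    AddMonoidHom.card_fiber_eq_of_mem_range f (hf h) (hf 0)
  have hcard : Fintype.card G = Fintype.card H * #{g | f g = 0} := by
    rw [← card_univ, card_eq_sum_card_fiberwise (fun g _ => mem_univ (f g))]
    simp [hfiber]
  rw [hcard, Nat.mul_div_cancel_left _ Fintype.card_pos, smul_sum,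
    ← sum_fiberwise univ f (fun g => φ (f g))]
  refine sum_congr rfl fun h _ => ?_
  rw [sum_congr rfl fun g hg => by rw [(mem_filter.mp hg).2], sum_const, hfiber]

lemma ZMod.stdAddChar_mul_natCast {q Q c : ℕ} [NeZero q] [NeZero Q] (h : Q ∣ q)
    (hc : q = c * Q) (t : ZMod q) :
    stdAddChar (t * (c : ZMod q)) = stdAddChar (castHom h (ZMod Q) t) := by
  obtain ⟨a, rfl⟩ := intCast_surjective t
  have hQ : (Q : ℂ) ≠ 0 := Nat.cast_ne_zero.mpr (NeZero.ne Q)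
  have hc' : (c : ℂ) ≠ 0 := Nat.cast_ne_zero.mpr (left_ne_zero_of_mul (hc ▸ NeZero.ne q))
  rw [map_intCast, ← Int.cast_natCast, ← Int.cast_mul, stdAddChar_coe, stdAddChar_coe, hc]
  congr 1
  push_cast
  field_simp

lemma ZMod.dft_comp_castHom {E : Type*} [AddCommGroup E] [Module ℂ E] {q Q c : ℕ} [NeZero q]
    [NeZero Q] (h : Q ∣ q) (hc : q = c * Q) (Φ : ZMod Q → E) :
    𝓕 (fun t => Φ (castHom h (ZMod Q) t)) c = c • 𝓕 Φ 1 := by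
  have hshift (t : ZMod q) :
      stdAddChar (-(t * (c : ZMod q))) = stdAddChar (-castHom h (ZMod Q) t) := by
    rw [← map_neg, ← stdAddChar_mul_natCast h hc, neg_mul]
  simp only [dft_apply, hshift, mul_one]
  rw [sum_comp_of_surjective_addMonoidHom (castHom h (ZMod Q)) (castHom_surjective h)
    (fun s => stdAddChar (-s) • Φ s), card, card, hc, Nat.mul_div_cancel _ (NeZero.pos Q)]

lemma ZMod.isUnit_of_isUnit_cast {d N j : ℕ} [NeZero N] (hN : N ∣ d ^ j) {t : ZMod N}
    (ht : IsUnit (cast t : ZMod d)) : IsUnit t := by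
  rw [cast_eq_val, isUnit_iff_coprime] at ht
  rw [← natCast_zmod_val t, isUnit_iff_coprime]
  exact (ht.pow_right j).coprime_dvd_right hN

lemma DirichletCharacter.changeLevel_apply_of_dvd_pow {R : Type*} [CommMonoidWithZero R]
    {d N j : ℕ} [NeZero N] (h : d ∣ N) (hN : N ∣ d ^ j) (χ : DirichletCharacter R d)
    (t : ZMod N) : changeLevel h χ t = χ (cast t) := by
  by_cases ht : IsUnit t
  · exact changeLevel_eq_cast_of_dvd χ h ht.unit
  · rw [MulChar.map_nonunit _ ht, MulChar.map_nonunit _ (mt (isUnit_of_isUnit_cast hN) ht)]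

lemma Gsum_eq_gaussSum {q : ℕ} [NeZero q] (χ : DirichletCharacter ℂ q) :
    Gsum χ = gaussSum χ stdAddChar := by
  unfold Gsum gaussSum
  refine sum_congr rfl fun x _ => ?_
  rw [stdAddChar_apply, toCircle_apply]

lemma natCast_mul_Jsum_eq_sum_prod_gaussSum_mulShift {q k : ℕ} [NeZero q]
    (χ : Fin k → DirichletCharacter ℂ q) {e : AddChar (ZMod q) ℂ} (he : e.IsPrimitive)
    (B : ZMod q) :
    (q : ℂ) * Jsum χ B = ∑ t, e (-(t * B)) * ∏ i, gaussSum (χ i) (e.mulShift t) := by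
  classical
  have hprod (t : ZMod q) : ∏ i, gaussSum (χ i) (e.mulShift t)
      = ∑ x : Fin k → ZMod q, (∏ i, χ i (x i)) * e (t * ∑ i, x i) := by
    unfold gaussSum
    rw [Fintype.prod_sum]
    refine sum_congr rfl fun x _ => ?_
    rw [prod_mul_distrib, mul_sum, map_sum_eq_prod]
    simp only [mulShift_apply]
  have horth (s : ZMod q) : ∑ t, e (t * (s - B)) = if s = B then (q : ℂ) else 0 := by
    simp [sum_mulShift _ he, sub_eq_zero]
  calc (q : ℂ) * Jsum χ B
      = ∑ x : Fin k → ZMod q, (∏ i, χ i (x i)) * ∑ t, e (t * ((∑ i, x i) - B)) := by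
        simp only [Jsum, horth, mul_sum, mul_ite, ite_mul, mul_zero, zero_mul, mul_comm]
    _ = ∑ t, e (-(t * B)) * ∏ i, gaussSum (χ i) (e.mulShift t) := by
        simp only [hprod, mul_sum]
        rw [sum_comm]
        refine sum_congr rfl fun t _ => sum_congr rfl fun x _ => ?_
        rw [mul_sub, sub_eq_add_neg, map_add_eq_mul, mul_sum]
        ring

lemma prod_gaussSum_mulShift_of_exists_isPrimitive {R : Type*} [CommRing R] [IsDomain R]
    {N : ℕ} [NeZero N] {ι : Type*} [Fintype ι] (e : AddChar (ZMod N) R)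
    {χ : ι → DirichletCharacter R N}
    (hχ : ∃ i, (χ i).IsPrimitive) (t : ZMod N) :
    ∏ i, gaussSum (χ i) (e.mulShift t) = (∏ i, χ i)⁻¹ t * ∏ i, gaussSum (χ i) e := by
  by_cases ht : IsUnit t
  · obtain ⟨u, rfl⟩ := ht
    rw [prod_congr rfl fun i _ => gaussSum_mulShift_eq (χ i) e u, prod_mul_distrib,
      ← MulChar.prod_apply_coe, prod_inv_distrib]
  · obtain ⟨j, hj⟩ := hχ
    rw [MulChar.map_nonunit _ ht, zero_mul]
    exact prod_eq_zero (mem_univ j) (gaussSum_eq_zero_of_isPrimitive_of_not_isPrimitive _ hj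
      (not_isPrimitive_mulShift e ht))

lemma natCast_mul_Jsum_eq_dft_mul_prod_gaussSum {q k : ℕ} [NeZero q]
    {χ : Fin k → DirichletCharacter ℂ q} (hχ : ∃ i, (χ i).IsPrimitive) (B : ZMod q) :
    (q : ℂ) * Jsum χ B = 𝓕 ⇑(∏ i, χ i)⁻¹ B * ∏ i, gaussSum (χ i) stdAddChar := by
  rw [natCast_mul_Jsum_eq_sum_prod_gaussSum_mulShift χ (isPrimitive_stdAddChar q), dft_apply,
    sum_mul]
  refine sum_congr rfl fun t _ => ?_
  rw [prod_gaussSum_mulShift_of_exists_isPrimitive _ hχ, smul_eq_mul, mul_assoc, mul_comm t]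

lemma DirichletCharacter.IsPrimitive.gaussSum_mul_dft_inv {N : ℕ} [NeZero N]
    {ψ : DirichletCharacter ℂ N} (hψ : ψ.IsPrimitive) :
    gaussSum ψ stdAddChar * 𝓕 ⇑ψ⁻¹ 1 = N := by
  have h𝓕ψ : 𝓕 ψ = gaussSum ψ stdAddChar • fun k => ψ⁻¹ (-k) := by
    ext k
    rw [hψ.fourierTransform_eq_inv_mul_gaussSum, Pi.smul_apply, smul_eq_mul, mul_comm]
  have := congrFun (dft_dft (ψ : ZMod N → ℂ)) (-1)
  rw [h𝓕ψ, _root_.map_smul, dft_comp_neg] at this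
  simpa using this

theorem stmt15_general {p m n k : ℕ} [NeZero (p ^ m)] [NeZero (p ^ (m - n))]
    (hnm : n < m)
    (χ : Fin (k + 1) → DirichletCharacter ℂ (p ^ m))
    (hex : ∃ i, (χ i).IsPrimitive)
    -- χ₁⋯χ_k is induced by a primitive character ψ mod p^(m-n)
    (ψ : DirichletCharacter ℂ (p ^ (m - n))) (hψ : ψ.IsPrimitive)
    (hind : ∏ i, χ i = DirichletCharacter.changeLevel
      (pow_dvd_pow p (Nat.sub_le m n)) ψ) :
    Jsum χ ((p ^ n : ℕ) : ZMod (p ^ m)) = (∏ i, Gsum (χ i)) / Gsum ψ := by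
  have hc : p ^ m = p ^ n * p ^ (m - n) := by rw [← pow_add, Nat.add_sub_cancel' hnm.le]
  have hlevel : p ^ m ∣ (p ^ (m - n)) ^ m := by
    rw [← pow_mul]
    exact pow_dvd_pow p (Nat.le_mul_of_pos_left m (Nat.sub_pos_of_lt hnm))
  have hinv : ⇑(∏ i, χ i)⁻¹ = fun t => ψ⁻¹ (castHom (pow_dvd_pow p (Nat.sub_le m n)) _ t) := by
    funext t
    rw [hind, ← map_inv, changeLevel_apply_of_dvd_pow _ hlevel, castHom_apply]
  have hJ := natCast_mul_Jsum_eq_dft_mul_prod_gaussSum hex ((p ^ n : ℕ) : ZMod (p ^ m))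
  rw [hinv, dft_comp_castHom _ hc, nsmul_eq_mul] at hJ
  have hψF := hψ.gaussSum_mul_dft_inv
  simp only [Gsum_eq_gaussSum]
  set g := gaussSum ψ stdAddChar
  set G := ∏ i, gaussSum (χ i) stdAddChar
  have hg : g ≠ 0 := left_ne_zero_of_mul (hψF ▸ Nat.cast_ne_zero.mpr (NeZero.ne _))
  rw [eq_div_iff hg]
  refine mul_left_cancel₀ (Nat.cast_ne_zero.mpr (NeZero.ne (p ^ m)) : ((p ^ m : ℕ) : ℂ) ≠ 0) ?_
  have hcC : ((p ^ m : ℕ) : ℂ) = (p ^ n : ℕ) * (p ^ (m - n) : ℕ) := by rw [hc, Nat.cast_mul]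
  linear_combination g * hJ + ((p ^ n : ℕ) : ℂ) * G * hψF - G * hcC

/-- Here the `k+1 ≥ 1` characters are `χ 0, …, χ (Fin.last k)`, at least one of
which is primitive. -/
theorem stmt15 {p m n k : ℕ} [NeZero (p ^ m)] [NeZero (p ^ (m - n))]
    (hp : p.Prime) (hnm : n < m)
    (χ : Fin (k + 1) → DirichletCharacter ℂ (p ^ m))
    (hex : ∃ i, (χ i).IsPrimitive)
    -- χ₁⋯χ_k is induced by a primitive character ψ mod p^(m-n)
    (ψ : DirichletCharacter ℂ (p ^ (m - n))) (hψ : ψ.IsPrimitive)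
    (hind : ∏ i, χ i = DirichletCharacter.changeLevel
      (pow_dvd_pow p (Nat.sub_le m n)) ψ) :
    Jsum χ ((p ^ n : ℕ) : ZMod (p ^ m)) = (∏ i, Gsum (χ i)) / Gsum ψ :=
  stmt15_general hnm χ hex ψ hψ hind
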